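/- Let E be a row-finite graph. E satisfies Condition (L) (every cycle has an exit) if and only if the group ℤ acts freely on the nonzero elements of the talented monoid M_E^{gr}, i.e., ^n a = a for nonzero a implies n = 0. -/

import Mathlib

set_option linter.unusedSectionVars false

/-- The algebraic preorder on a commutative monoid: `a ≤ b` iff `b = a + c` for some `c`. -/
def algLE {M : Type*} [AddCommMonoid M] (a b : M) : Prop := ∃ c, b = a + c

/-- A row-finite directed graph: vertices `V`, edges `Ed`, source `s`, range `r`,
and for each vertex the (finite) set of edges it emits. -/
structure RFGraph (V : Type) (Ed : Type) where
  s : Ed → V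
  r : Ed → V
  emit : V → Finset Ed
  mem_emit : ∀ e v, e ∈ emit v ↔ s e = v

namespace RFGraph

variable {V Ed : Type} [DecidableEq V] (G : RFGraph V Ed)

/-- The one-step rewriting relation `→₁` on the free commutative monoid `Multiset V`:
replace one occurrence of a non-sink vertex `v` by the sum of ranges of edges emitted by `v`. -/
def Step1 (a b : Multiset V) : Prop :=
  ∃ v : V, v ∈ a ∧ G.emit v ≠ ∅ ∧ b = a.erase v + (G.emit v).val.map G.r

/-- The reflexive-transitive closure `→` of `→₁`. -/
def Step : Multiset V → Multiset V → Prop := Relation.ReflTransGen G.Step1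

/-- The congruence on the free commutative monoid generated by `→₁`. -/
def gcon : AddCon (Multiset V) := addConGen G.Step1

/-- The graph monoid `M_E`. -/
def GM := G.gcon.Quotient

instance : AddCommMonoid G.GM := inferInstanceAs (AddCommMonoid G.gcon.Quotient)

/-- One-step rewriting for the talented monoid: replace `v(i)` by `Σ_{e ∈ s⁻¹(v)} r(e)(i+1)`. -/
def TStep1 (a b : Multiset (V × ℤ)) : Prop :=
  ∃ (v : V) (i : ℤ), (v, i) ∈ a ∧ G.emit v ≠ ∅ ∧
    b = a.erase (v, i) + (G.emit v).val.map (fun e => (G.r e, i + 1))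

/-- The congruence generated by the talented one-step relation. -/
def tcon : AddCon (Multiset (V × ℤ)) := addConGen G.TStep1

/-- The talented monoid `M_E^{gr}`. -/
def TM := G.tcon.Quotient

instance : AddCommMonoid G.TM := inferInstanceAs (AddCommMonoid G.tcon.Quotient)

/-- The generator `v(i)` of the talented monoid. -/
def tgen (v : V) (i : ℤ) : G.TM := G.tcon.mk' {(v, i)}

/-- The shift `v(i) ↦ v(i+n)` on the free commutative monoid `Multiset (V × ℤ)`. -/
def shiftMul (n : ℤ) : Multiset (V × ℤ) →+ Multiset (V × ℤ) where
  toFun a := a.map fun p => (p.1, p.2 + n)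
  map_zero' := rfl
  map_add' a b := Multiset.map_add (fun p => (p.1, p.2 + n)) a b

lemma shift_inj (n : ℤ) : Function.Injective (fun p : V × ℤ => (p.1, p.2 + n)) := by
  rintro ⟨a, b⟩ ⟨c, d⟩ h
  simp only [Prod.mk.injEq] at h
  exact Prod.ext h.1 (by omega)

lemma tstep1_shift (n : ℤ) {a b : Multiset (V × ℤ)} (h : G.TStep1 a b) :
    G.TStep1 (shiftMul n a) (shiftMul n b) := by
  obtain ⟨v, i, hv, hne, rfl⟩ := h
  refine ⟨v, i + n, Multiset.mem_map.2 ⟨(v, i), hv, rfl⟩, hne, ?_⟩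
  show Multiset.map _ _ = _
  rw [Multiset.map_add]
  congr 1
  · exact (Multiset.map_erase _ (shift_inj n) (v, i) a)
  · rw [Multiset.map_map]
    congr 1
    funext e
    simp only [Function.comp_apply]
    congr 1
    omega

lemma tcon_shift (n : ℤ) {a b : Multiset (V × ℤ)} (h : G.tcon a b) :
    G.tcon (shiftMul n a) (shiftMul n b) := by
  have hle : addConGen G.TStep1 ≤
      { r := fun a b => G.tcon (shiftMul n a) (shiftMul n b)
        iseqv := ⟨fun _ => G.tcon.refl _, fun h => G.tcon.symm h,
          fun h₁ h₂ => G.tcon.trans h₁ h₂⟩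
        add' := fun h₁ h₂ => by
          simpa only [map_add] using G.tcon.add h₁ h₂ } := by
    refine (AddCon.addConGen_le).2 fun x y hxy => ?_
    exact AddConGen.Rel.of _ _ (G.tstep1_shift n hxy)
  exact hle h

/-- The `ℤ`-action on the talented monoid, `ⁿ(v(i)) = v(i+n)`. -/
def tshift (n : ℤ) : G.TM →+ G.TM :=
  G.tcon.lift (G.tcon.mk'.comp (shiftMul n)) (by
    intro a b h
    show G.tcon.mk' (shiftMul n a) = G.tcon.mk' (shiftMul n b)
    exact (AddCon.eq _).2 (G.tcon_shift n h))

/-- Reachability: there is a (possibly trivial) path from `u` to `v`. -/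
def Reaches (u v : V) : Prop :=
  Relation.ReflTransGen (fun a b => ∃ e : Ed, G.s e = a ∧ G.r e = b) u v

/-- A cycle: a nonempty path of edges, closed up, with distinct source vertices. -/
def IsCycle (p : List Ed) : Prop :=
  ∃ h : p ≠ [], List.Chain' (fun e f => G.r e = G.s f) p ∧
    G.r (p.getLast h) = G.s (p.head h) ∧ (p.map G.s).Nodup

/-- The cycle `p` has an exit: some vertex on it emits an edge not on the cycle. -/
def HasExit (p : List Ed) : Prop :=
  ∃ e : Ed, (∃ f ∈ p, G.s e = G.s f) ∧ e ∉ p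

/-- The cycle `p` has no exit: every vertex on it emits exactly its cycle edge. -/
def NoExit (p : List Ed) : Prop :=
  ∀ e ∈ p, G.emit (G.s e) = {e}

/-- `ℤ`-order-ideals of the talented monoid. -/
def IsOrderIdeal (I : Set G.TM) : Prop :=
  (0 : G.TM) ∈ I ∧ (∀ a b : G.TM, a ∈ I → b ∈ I → a + b ∈ I) ∧
    (∀ (n : ℤ) (a : G.TM), a ∈ I → G.tshift n a ∈ I) ∧
    (∀ a b : G.TM, algLE a b → b ∈ I → a ∈ I)

/-- The smallest `ℤ`-order-ideal of `M_E^{gr}` containing `v(0)`. -/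
def genIdeal (v : V) : Set G.TM :=
  ⋂₀ {I : Set G.TM | G.IsOrderIdeal I ∧ G.tgen v 0 ∈ I}

/-- Minimality in the talented monoid: `0 ≠ b ≤ a` implies `a ≤ b`. -/
def TMin (a : G.TM) : Prop := ∀ b : G.TM, b ≠ 0 → algLE b a → algLE a b

/-- The covering graph `\bar E`. -/
def cover : RFGraph (V × ℤ) (Ed × ℤ) where
  s p := (G.s p.1, p.2)
  r p := (G.r p.1, p.2 + 1)
  emit p := (G.emit p.1).map ⟨fun e => (e, p.2), fun a b h => by
    simpa using congrArg Prod.fst h⟩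
  mem_emit := by
    rintro ⟨e, n⟩ ⟨v, m⟩
    simp only [Finset.mem_map, Function.Embedding.coeFn_mk, Prod.mk.injEq, G.mem_emit]
    constructor
    · rintro ⟨a, ha, rfl, rfl⟩; exact ⟨ha, rfl⟩
    · rintro ⟨rfl, rfl⟩; first | exact ⟨e, rfl, rfl, rfl⟩ | exact ⟨e, rfl, rfl⟩

/-- The set of vertices on a cycle. -/
def cycVerts (p : List Ed) : Set V := {v | ∃ e ∈ p, G.s e = v}

end RFGraph

/-!
If a cycle without exit passes through `v`, rewriting `v(0)` once around the cycle gives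
`v(0) = v(|p|)`.

Conversely, one-step rewriting is locally confluent, so `ⁿa = a` with `n > 0` yields `β ≠ 0` such
that `β` and `ⁿβ` have a common ancestor. The full expansion `Φ_L` (rewrite every generator of
level `< L` until it reaches level `L` or a sink) is invariant under rewriting below level `L`, so
for large `L` the expansion `δ = Φ_{L-n}(β)` satisfies `Φ_L(δ) = ⁿδ`. As `Φ_L` never decreases the
number of generators, each generator of `δ` expands to a single generator of `ⁿδ`, along a path
whose vertices each emit exactly one edge. Chaining these paths through the finite support of `δ`
closes up; since levels grow by `n` per step the closed path is nonempty, and its shortest closed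
subpath is a cycle without exit.
-/

theorem Multiset.card_le_card_bind {α β : Type*} {s : Multiset α} {f : α → Multiset β}
    (hf : ∀ a ∈ s, f a ≠ 0) : Multiset.card s ≤ Multiset.card (s.bind f) := by
  induction s using Multiset.induction_on with
  | empty => simp
  | cons a s ih =>
    have ha := Multiset.card_pos.2 (hf a (Multiset.mem_cons_self a s))
    have hs := ih fun b hb => hf b (Multiset.mem_cons_of_mem hb)
    simp only [Multiset.cons_bind, Multiset.card_add, Multiset.card_cons]
    omega

theorem Multiset.card_eq_one_of_card_bind_eq {α β : Type*} {s : Multiset α}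
    {f : α → Multiset β} (hf : ∀ a ∈ s, f a ≠ 0)
    (h : Multiset.card (s.bind f) = Multiset.card s) : ∀ a ∈ s, Multiset.card (f a) = 1 := by
  intro a ha
  obtain ⟨t, rfl⟩ := Multiset.exists_cons_of_mem ha
  rw [Multiset.cons_bind, Multiset.card_add, Multiset.card_cons] at h
  have hrest := Multiset.card_le_card_bind fun b hb => hf b (Multiset.mem_cons_of_mem hb)
  have hfa := Multiset.card_pos.2 (hf a ha)
  omega

namespace RFGraph

variable {V Ed : Type} [DecidableEq V] {G : RFGraph V Ed}

section Rewriting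

variable (G) in
abbrev TStep : Multiset (V × ℤ) → Multiset (V × ℤ) → Prop := Relation.ReflTransGen G.TStep1

variable {a b c d : Multiset (V × ℤ)}

theorem TStep1.add_right (h : G.TStep1 a b) (c : Multiset (V × ℤ)) :
    G.TStep1 (a + c) (b + c) := by
  obtain ⟨v, i, hv, hne, rfl⟩ := h
  exact ⟨v, i, Multiset.mem_add.2 (.inl hv), hne, by
    rw [Multiset.erase_add_left_pos _ hv, add_right_comm]⟩

theorem TStep.add (hab : G.TStep a b) (hcd : G.TStep c d) : G.TStep (a + c) (b + d) := by
  have add_right : ∀ {a b : Multiset (V × ℤ)} (c), G.TStep a b → G.TStep (a + c) (b + c) :=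
    fun c h => Relation.ReflTransGen.lift (· + c) (fun _ _ h => h.add_right c) _ _ h
  refine (add_right c hab).trans ?_
  rw [add_comm b c, add_comm b d]
  exact add_right b hcd

theorem TStep.shift (n : ℤ) (h : G.TStep a b) : G.TStep (shiftMul n a) (shiftMul n b) :=
  Relation.ReflTransGen.lift (shiftMul n) (fun _ _ h => G.tstep1_shift n h) _ _ h

theorem TStep.tcon (h : G.TStep a b) : G.tcon a b := by
  induction h with
  | refl => exact G.tcon.refl a
  | tail _ hstep ih => exact G.tcon.trans ih (AddConGen.Rel.of _ _ hstep)

theorem TStep1.ne_zero (h : G.TStep1 a b) : a ≠ 0 ∧ b ≠ 0 := by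
  obtain ⟨v, i, hv, hne, rfl⟩ := h
  exact ⟨by rintro rfl; simp at hv, by simp [hne]⟩

theorem TStep.eq_zero_iff (h : G.TStep a b) : a = 0 ↔ b = 0 := by
  induction h with
  | refl => rfl
  | tail _ hstep ih => simp [ih, hstep.ne_zero]

theorem TStep1.diamond (hab : G.TStep1 a b) (hac : G.TStep1 a c) :
    ∃ d, Relation.ReflGen G.TStep1 b d ∧ G.TStep c d := by
  obtain ⟨v, i, hv, hvne, rfl⟩ := hab
  obtain ⟨w, j, hw, hwne, rfl⟩ := hac
  by_cases hwv : (w, j) = (v, i)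
  · obtain ⟨rfl, rfl⟩ := Prod.mk.inj hwv
    exact ⟨_, .refl, .refl⟩
  have hw' : (w, j) ∈ a.erase (v, i) := (Multiset.mem_erase_of_ne hwv).2 hw
  have hv' : (v, i) ∈ a.erase (w, j) := (Multiset.mem_erase_of_ne (Ne.symm hwv)).2 hv
  refine ⟨(a.erase (v, i)).erase (w, j) + (G.emit v).val.map (fun e => (G.r e, i + 1)) +
      (G.emit w).val.map (fun e => (G.r e, j + 1)),
    .single ⟨w, j, Multiset.mem_add.2 (.inl hw'), hwne, ?_⟩,
    .single ⟨v, i, Multiset.mem_add.2 (.inl hv'), hvne, ?_⟩⟩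
  · rw [Multiset.erase_add_left_pos _ hw']
  · rw [Multiset.erase_add_left_pos _ hv', Multiset.erase_comm, add_right_comm]

variable (G) in
def joinCon : AddCon (Multiset (V × ℤ)) where
  r := Relation.Join G.TStep
  iseqv := Relation.equivalence_join_reflTransGen fun _ _ _ => TStep1.diamond
  add' := fun ⟨c, hac, hbc⟩ ⟨d, hed, hfd⟩ => ⟨c + d, hac.add hed, hbc.add hfd⟩

theorem exists_tstep_of_tcon (h : G.tcon a b) : ∃ c, G.TStep a c ∧ G.TStep b c :=
  (AddCon.addConGen_le (c := G.joinCon)).2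
    (fun _ y hxy => ⟨y, .single hxy, .refl⟩) h

end Rewriting

section Quotient

theorem tshift_mk' (n : ℤ) (a : Multiset (V × ℤ)) :
    G.tshift n (G.tcon.mk' a) = G.tcon.mk' (shiftMul n a) :=
  rfl

theorem tshift_tgen (n : ℤ) (v : V) (i : ℤ) : G.tshift n (G.tgen v i) = G.tgen v (i + n) :=
  rfl

theorem shiftMul_neg_shiftMul (n : ℤ) (a : Multiset (V × ℤ)) :
    shiftMul (-n) (shiftMul n a) = a := by
  show Multiset.map _ (Multiset.map _ a) = a
  simp

theorem tgen_ne_zero (v : V) (i : ℤ) : G.tgen v i ≠ 0 := by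
  intro h
  obtain ⟨c, h₁, h₂⟩ := exists_tstep_of_tcon ((AddCon.eq G.tcon).1 h)
  simpa using h₁.eq_zero_iff.2 (h₂.eq_zero_iff.1 rfl)

end Quotient

section DetPath

variable (G) in
inductive DetPath : V → List Ed → V → Prop
  | nil (v : V) : DetPath v [] v
  | cons {v w : V} {e : Ed} {es : List Ed} :
      G.emit v = {e} → DetPath (G.r e) es w → DetPath v (e :: es) w

variable {v w : V} {e : Ed} {es fs : List Ed}

theorem s_eq_of_emit_eq_singleton (h : G.emit v = {e}) : G.s e = v :=
  (G.mem_emit e v).1 (h ▸ Finset.mem_singleton_self e)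

theorem detPath_nil_iff : G.DetPath v [] w ↔ v = w :=
  ⟨fun | .nil _ => rfl, fun h => h ▸ .nil v⟩

theorem detPath_cons_iff : G.DetPath v (e :: es) w ↔ G.emit v = {e} ∧ G.DetPath (G.r e) es w :=
  ⟨fun | .cons he h => ⟨he, h⟩, fun ⟨he, h⟩ => .cons he h⟩

theorem detPath_append_iff :
    G.DetPath v (es ++ fs) w ↔ ∃ u, G.DetPath v es u ∧ G.DetPath u fs w := by
  induction es generalizing v with
  | nil => simp [detPath_nil_iff]
  | cons e es ih => simp [detPath_cons_iff, ih, and_assoc]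

theorem DetPath.s_head (h : G.DetPath v (e :: es) w) : G.s e = v :=
  s_eq_of_emit_eq_singleton (detPath_cons_iff.1 h).1

theorem detPath_iff (hes : es ≠ []) :
    G.DetPath v es w ↔ G.s (es.head hes) = v ∧ es.IsChain (fun e f => G.r e = G.s f) ∧
      G.r (es.getLast hes) = w ∧ ∀ e ∈ es, G.emit (G.s e) = {e} := by
  induction es generalizing v with
  | nil => exact absurd rfl hes
  | cons e es ih =>
    rw [detPath_cons_iff]
    rcases es with _ | ⟨f, es⟩
    · simp only [detPath_nil_iff, List.head_cons, List.isChain_singleton, List.getLast_singleton,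
        List.mem_singleton, forall_eq, true_and]
      constructor
      · rintro ⟨he, rfl⟩
        exact ⟨s_eq_of_emit_eq_singleton he, rfl, s_eq_of_emit_eq_singleton he ▸ he⟩
      · rintro ⟨rfl, rfl, he⟩
        exact ⟨he, rfl⟩
    · rw [ih (List.cons_ne_nil f es)]
      simp only [List.head_cons, List.isChain_cons_cons, List.getLast_cons_cons,
        List.forall_mem_cons]
      constructor
      · rintro ⟨he, hf, hc, hl, hall⟩
        exact ⟨s_eq_of_emit_eq_singleton he, ⟨hf.symm, hc⟩, hl,
          s_eq_of_emit_eq_singleton he ▸ he, hall⟩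
      · rintro ⟨rfl, ⟨hf, hc⟩, hl, he, hall⟩
        exact ⟨he, hf.symm, hc, hl, hall⟩

theorem DetPath.tstep (h : G.DetPath v es w) (i : ℤ) :
    G.TStep {(v, i)} {(w, i + es.length)} := by
  induction h generalizing i with
  | nil v => simpa using Relation.ReflTransGen.refl
  | @cons v _ e es he _ ih =>
    have hlen : i + ((e :: es).length : ℤ) = i + 1 + es.length := by
      push_cast [List.length_cons]
      ring
    rw [hlen]
    exact .head ⟨v, i, Multiset.mem_singleton_self _, by simp [he], by simp [he]⟩ (ih (i + 1))

end DetPath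

section Cycles

variable {p : List Ed}

theorem hasExit_iff_not_noExit (hp : G.IsCycle p) : G.HasExit p ↔ ¬G.NoExit p := by
  obtain ⟨-, -, -, hnd⟩ := hp
  constructor
  · rintro ⟨e, ⟨f, hf, hef⟩, he⟩ hno
    have : e ∈ G.emit (G.s f) := (G.mem_emit e _).2 hef
    rw [hno f hf, Finset.mem_singleton] at this
    exact he (this ▸ hf)
  · intro hno
    obtain ⟨f, hf, hsf⟩ : ∃ f ∈ p, G.emit (G.s f) ≠ {f} := by simpa [NoExit] using hno
    obtain ⟨e, he, hef⟩ : ∃ e ∈ G.emit (G.s f), e ≠ f := by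
      by_contra! h
      exact hsf (Finset.eq_singleton_iff_unique_mem.2 ⟨(G.mem_emit f _).2 rfl, h⟩)
    have hs : G.s e = G.s f := (G.mem_emit e _).1 he
    exact ⟨e, ⟨f, hf, hs⟩, fun hep => hef (List.inj_on_of_nodup_map hnd hep hf hs)⟩

theorem isCycle_and_noExit_iff :
    G.IsCycle p ∧ G.NoExit p ↔
      ∃ hp : p ≠ [], G.DetPath (G.s (p.head hp)) p (G.s (p.head hp)) ∧ p.Nodup := by
  constructor
  · rintro ⟨⟨hp, hc, hl, hnd⟩, hno⟩
    exact ⟨hp, (detPath_iff hp).2 ⟨rfl, hc, hl, hno⟩, hnd.of_map _⟩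
  · rintro ⟨hp, h, hnd⟩
    obtain ⟨-, hc, hl, hno⟩ := (detPath_iff hp).1 h
    -- along such a path the source determines the edge
    refine ⟨⟨hp, hc, hl, hnd.map_on fun e he f hf hs => ?_⟩, hno⟩
    rw [← Finset.singleton_inj, ← hno e he, ← hno f hf, hs]

theorem exists_nodup_of_detPath (hes : es ≠ []) (h : G.DetPath v es v) :
    ∃ u fs, fs ≠ [] ∧ G.DetPath u fs u ∧ fs.Nodup := by
  induction hn : es.length using Nat.strong_induction_on generalizing v es with
  | _ n ih =>
  by_cases hnd : es.Nodup
  · exact ⟨v, es, hes, h, hnd⟩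
  obtain ⟨e, hee⟩ : ∃ e, [e, e].Sublist es := by simpa [List.nodup_iff_sublist] using hnd
  obtain ⟨l₁, l₂, rfl, he₁, he₂⟩ := List.cons_sublist_iff.1 hee
  obtain ⟨s₁, t₁, rfl⟩ := List.append_of_mem he₁
  obtain ⟨s₂, t₂, rfl⟩ := List.append_of_mem (List.singleton_sublist.1 he₂)
  -- the edge `e` occurs twice, so `e :: (t₁ ++ s₂)` is a shorter closed path
  rw [show s₁ ++ e :: t₁ ++ (s₂ ++ e :: t₂) = s₁ ++ (e :: (t₁ ++ s₂) ++ e :: t₂) by simp,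
    detPath_append_iff] at h
  obtain ⟨u, -, hu⟩ := h
  obtain ⟨w, hc, hw⟩ := detPath_append_iff.1 hu
  rw [← hw.s_head, ← hc.s_head] at hc
  exact ih _ (by simp [← hn]; omega) (List.cons_ne_nil _ _) hc rfl

theorem forall_detPath_eq_nil_iff :
    (∀ v es, G.DetPath v es v → es = []) ↔ ∀ p, ¬(G.IsCycle p ∧ G.NoExit p) := by
  simp only [isCycle_and_noExit_iff, not_exists, not_and]
  constructor
  · exact fun h p hp hdp _ => hp (h _ p hdp)
  · intro h v es hdp
    by_contra hes
    obtain ⟨u, fs, hfs, hu, hnd⟩ := exists_nodup_of_detPath hes hdp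
    obtain ⟨f, fs, rfl⟩ := List.exists_cons_of_ne_nil hfs
    exact h _ hfs (hu.s_head ▸ hu) hnd

end Cycles

section Expansion

variable (G) in
noncomputable def expand (L : ℤ) (x : V × ℤ) : Multiset (V × ℤ) :=
  if x.2 < L ∧ (G.emit x.1).Nonempty then
    (G.emit x.1).val.bind fun e => expand L (G.r e, x.2 + 1)
  else {x}
termination_by (L - x.2).toNat
decreasing_by omega

variable (G) in
theorem expand_induction (L : ℤ) {motive : V × ℤ → Prop}
    (leaf : ∀ x, ¬(x.2 < L ∧ (G.emit x.1).Nonempty) → motive x)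
    (node : ∀ x, x.2 < L → (G.emit x.1).Nonempty →
      (∀ e ∈ G.emit x.1, motive (G.r e, x.2 + 1)) → motive x)
    (x : V × ℤ) : motive x :=
  if h : x.2 < L ∧ (G.emit x.1).Nonempty then
    node x h.1 h.2 fun e _ => expand_induction L leaf node (G.r e, x.2 + 1)
  else leaf x h
termination_by (L - x.2).toNat
decreasing_by omega

variable {L : ℤ} {x y : V × ℤ}

theorem expand_of_lt (hx : x.2 < L) (hne : (G.emit x.1).Nonempty) :
    G.expand L x = (G.emit x.1).val.bind fun e => G.expand L (G.r e, x.2 + 1) := by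
  rw [expand, if_pos ⟨hx, hne⟩]

theorem expand_of_not_lt (h : ¬(x.2 < L ∧ (G.emit x.1).Nonempty)) : G.expand L x = {x} := by
  rw [expand, if_neg h]

theorem expand_ne_zero (L : ℤ) (x : V × ℤ) : G.expand L x ≠ 0 := by
  induction x using G.expand_induction L with
  | leaf x h => simp [expand_of_not_lt h]
  | node x hx hne ih =>
    rw [expand_of_lt hx hne, ← Multiset.card_pos]
    exact (Finset.card_pos.2 hne).trans_le (Multiset.card_le_card_bind ih)

theorem expand_shift (L n : ℤ) (x : V × ℤ) :
    G.expand L (x.1, x.2 + n) = shiftMul n (G.expand (L - n) x) := by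
  induction x using G.expand_induction (L - n) with
  | leaf x h =>
    rw [expand_of_not_lt h, expand_of_not_lt (by simpa [lt_sub_iff_add_lt] using h)]
    rfl
  | node x hx hne ih =>
    rw [expand_of_lt (x := (x.1, x.2 + n)) (by dsimp only; omega) hne, expand_of_lt hx hne]
    refine (Multiset.bind_congr fun e he => ?_).trans (Multiset.map_bind _ _ _).symm
    have := ih e he
    dsimp only at this ⊢
    rw [add_right_comm, this]
    rfl

theorem bind_expand_of_le {L' : ℤ} (h : L' ≤ L) (x : V × ℤ) :
    (G.expand L' x).bind (G.expand L) = G.expand L x := by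
  induction x using G.expand_induction L' with
  | leaf x hx => rw [expand_of_not_lt hx, Multiset.singleton_bind]
  | node x hx hne ih =>
    rw [expand_of_lt hx hne, expand_of_lt (hx.trans_le h) hne, Multiset.bind_assoc]
    exact Multiset.bind_congr ih

theorem exists_detPath_of_expand_eq_singleton (h : G.expand L x = {y}) :
    ∃ es, G.DetPath x.1 es y.1 ∧ x.2 + es.length = y.2 := by
  induction x using G.expand_induction L with
  | leaf x hx =>
    obtain rfl := Multiset.singleton_inj.1 ((expand_of_not_lt hx).symm.trans h)
    exact ⟨[], .nil _, by simp⟩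
  | node x hx hne ih =>
    rw [expand_of_lt hx hne] at h
    obtain ⟨e, he⟩ : ∃ e, G.emit x.1 = {e} := by
      refine Finset.card_eq_one.1 (le_antisymm ?_ (Finset.card_pos.2 hne))
      have := Multiset.card_le_card_bind fun e (_ : e ∈ (G.emit x.1).val) =>
        G.expand_ne_zero L (G.r e, x.2 + 1)
      rwa [h, Multiset.card_singleton] at this
    rw [he, Finset.singleton_val, Multiset.singleton_bind] at h
    obtain ⟨es, hdp, hlen⟩ := ih e (by simp [he]) h
    exact ⟨e :: es, .cons he hdp, by push_cast [List.length_cons] at hlen ⊢; omega⟩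

variable (G) in
noncomputable def expandAll (L : ℤ) (a : Multiset (V × ℤ)) : Multiset (V × ℤ) :=
  a.bind (G.expand L)

theorem expandAll_ne_zero {a : Multiset (V × ℤ)} (ha : a ≠ 0) : G.expandAll L a ≠ 0 := by
  rw [← Multiset.card_pos] at ha ⊢
  exact ha.trans_le (Multiset.card_le_card_bind fun x _ => G.expand_ne_zero L x)

theorem expandAll_shiftMul (L n : ℤ) (a : Multiset (V × ℤ)) :
    G.expandAll L (shiftMul n a) = shiftMul n (G.expandAll (L - n) a) := by
  refine (Multiset.bind_map _ _ _).trans ?_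
  exact (Multiset.bind_congr fun x _ => expand_shift L n x).trans (Multiset.map_bind _ _ _).symm

theorem expandAll_expandAll {L' : ℤ} (h : L' ≤ L) (a : Multiset (V × ℤ)) :
    G.expandAll L (G.expandAll L' a) = G.expandAll L a := by
  rw [expandAll, expandAll, Multiset.bind_assoc]
  exact Multiset.bind_congr fun x _ => bind_expand_of_le h x

variable {a b : Multiset (V × ℤ)}

theorem TStep1.exists_le_snd (h : G.TStep1 a b) : ∀ x ∈ a, ∃ y ∈ b, x.2 ≤ y.2 := by
  obtain ⟨v, i, -, hne, rfl⟩ := h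
  intro x hx
  by_cases hxv : x = (v, i)
  · obtain ⟨e, he⟩ := Finset.nonempty_iff_ne_empty.2 hne
    exact ⟨(G.r e, i + 1), Multiset.mem_add.2 (.inr (Multiset.mem_map.2 ⟨e, he, rfl⟩)),
      by simp [hxv]⟩
  · exact ⟨x, Multiset.mem_add.2 (.inl ((Multiset.mem_erase_of_ne hxv).2 hx)), le_rfl⟩

theorem TStep1.expandAll_eq (h : G.TStep1 a b) (hb : ∀ y ∈ b, y.2 ≤ L) :
    G.expandAll L a = G.expandAll L b := by
  obtain ⟨v, i, hv, hne, rfl⟩ := h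
  obtain ⟨e, he⟩ := Finset.nonempty_iff_ne_empty.2 hne
  have hi : i < L := by
    have := hb _ (Multiset.mem_add.2 (.inr (Multiset.mem_map.2 ⟨e, he, rfl⟩)))
    simp only at this
    omega
  conv_lhs => rw [← Multiset.cons_erase hv]
  rw [expandAll, expandAll, Multiset.cons_bind, Multiset.add_bind, Multiset.bind_map,
    expand_of_lt hi ⟨e, he⟩, add_comm]

theorem TStep.expandAll_eq (h : G.TStep a b) (hb : ∀ y ∈ b, y.2 ≤ L) :
    G.expandAll L a = G.expandAll L b := by
  induction h with
  | refl => rfl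
  | tail _ hstep ih =>
    rw [← hstep.expandAll_eq hb]
    exact ih fun x hx =>
      let ⟨y, hy, hxy⟩ := hstep.exists_le_snd x hx
      hxy.trans (hb y hy)

end Expansion

section Free

theorem exists_closed_detPath_of_forall_exists {S : Finset (V × ℤ)} (hS : S.Nonempty) {m : ℤ}
    (hm : 0 < m)
    (hsucc : ∀ x ∈ S, ∃ z ∈ S, ∃ es, G.DetPath x.1 es z.1 ∧ x.2 + es.length = z.2 + m) :
    ∃ v es, es ≠ [] ∧ G.DetPath v es v := by
  choose! f hfS es hes hlen using hsucc
  have hiter : ∀ k : ℕ, ∀ x ∈ S, ∃ ps,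
      G.DetPath x.1 ps (f^[k] x).1 ∧ x.2 + ps.length = (f^[k] x).2 + k * m := by
    intro k
    induction k with
    | zero => exact fun x _ => ⟨[], .nil _, by simp⟩
    | succ k ih =>
      intro x hx
      obtain ⟨ps, hps, hlen'⟩ := ih (f x) (hfS x hx)
      refine ⟨es x ++ ps, detPath_append_iff.2 ⟨_, hes x hx, hps⟩, ?_⟩
      rw [Function.iterate_succ_apply, List.length_append]
      push_cast
      linarith [hlen x hx]
  obtain ⟨x₀, hx₀⟩ := hS
  have hmaps : ∀ k, f^[k] x₀ ∈ (S : Set (V × ℤ)) := fun k =>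
    Set.MapsTo.iterate (fun x hx => hfS x hx) k hx₀
  obtain ⟨i, j, hij, heq⟩ := S.finite_toSet.exists_lt_map_eq_of_forall_mem hmaps
  set y := f^[i] x₀
  have hy : f^[j - i] y = y := by
    rw [← Function.iterate_add_apply, Nat.sub_add_cancel hij.le, ← heq]
  obtain ⟨ps, hps, hlen'⟩ := hiter (j - i) y (hmaps i)
  rw [hy] at hps hlen'
  -- the level of `y` grows by `(j - i) * m > 0` along `ps`
  refine ⟨y.1, ps, fun hnil => ?_, hps⟩
  have hpos : (0 : ℤ) < (j - i : ℕ) * m := mul_pos (by exact_mod_cast Nat.sub_pos_of_lt hij) hm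
  rw [hnil, List.length_nil, Nat.cast_zero, add_zero] at hlen'
  linarith

theorem exists_closed_detPath_of_expandAll_eq {δ : Multiset (V × ℤ)} (hδ : δ ≠ 0) {m L : ℤ}
    (hm : 0 < m) (h : G.expandAll L δ = shiftMul m δ) :
    ∃ v es, es ≠ [] ∧ G.DetPath v es v := by
  have hcard : ∀ x ∈ δ, Multiset.card (G.expand L x) = 1 := by
    refine Multiset.card_eq_one_of_card_bind_eq (fun x _ => G.expand_ne_zero L x) ?_
    exact (congrArg Multiset.card h).trans (Multiset.card_map _ _)
  refine exists_closed_detPath_of_forall_exists (S := δ.toFinset)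
    (Multiset.toFinset_nonempty.2 hδ) hm fun x hx => ?_
  rw [Multiset.mem_toFinset] at hx
  obtain ⟨y, hy⟩ := Multiset.card_eq_one.1 (hcard x hx)
  obtain ⟨es, hdp, hlen⟩ := exists_detPath_of_expand_eq_singleton hy
  have hyδ : y ∈ shiftMul m δ := h ▸ Multiset.mem_bind.2 ⟨x, hx, hy ▸ Multiset.mem_singleton_self y⟩
  obtain ⟨z, hz, rfl⟩ := Multiset.mem_map.1 hyδ
  exact ⟨z, Multiset.mem_toFinset.2 hz, es, hdp, hlen⟩

theorem exists_closed_detPath_of_tstep {α β : Multiset (V × ℤ)} (hβ : β ≠ 0) {m : ℤ}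
    (hm : 0 < m) (h₁ : G.TStep α β) (h₂ : G.TStep α (shiftMul m β)) :
    ∃ v es, es ≠ [] ∧ G.DetPath v es v := by
  obtain ⟨B, hB⟩ := (β.map Prod.snd).toFinset.exists_le
  have hβB : ∀ y ∈ β, y.2 ≤ B := fun y hy =>
    hB _ (Multiset.mem_toFinset.2 (Multiset.mem_map_of_mem _ hy))
  have hβL : ∀ y ∈ shiftMul m β, y.2 ≤ B + m := by
    intro y hy
    obtain ⟨z, hz, rfl⟩ := Multiset.mem_map.1 hy
    simpa using hβB z hz
  refine exists_closed_detPath_of_expandAll_eq (expandAll_ne_zero (G := G) (L := B) hβ) hm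
    (L := B + m) ?_
  calc G.expandAll (B + m) (G.expandAll B β) = G.expandAll (B + m) β :=
        expandAll_expandAll (by omega) β
    _ = G.expandAll (B + m) (shiftMul m β) :=
        (h₁.expandAll_eq fun y hy => (hβB y hy).trans (by omega)).symm.trans (h₂.expandAll_eq hβL)
    _ = shiftMul m (G.expandAll B β) := by rw [expandAll_shiftMul, add_sub_cancel_right]

theorem exists_closed_detPath_of_tshift_eq {a : G.TM} (ha : a ≠ 0) {n : ℤ} (hn : n ≠ 0)
    (h : G.tshift n a = a) : ∃ v es, es ≠ [] ∧ G.DetPath v es v := by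
  obtain ⟨α, rfl⟩ := AddCon.mk'_surjective a
  rw [tshift_mk'] at h
  obtain ⟨γ, h₁, h₂⟩ := exists_tstep_of_tcon ((AddCon.eq G.tcon).1 h)
  have hγ : γ ≠ 0 := fun hγ => ha (by rw [h₂.eq_zero_iff.2 hγ]; rfl)
  rcases hn.lt_or_gt with hn | hn
  · refine exists_closed_detPath_of_tstep hγ (neg_pos.2 hn) h₂ ?_
    simpa only [shiftMul_neg_shiftMul] using h₁.shift (-n)
  · exact exists_closed_detPath_of_tstep hγ hn h₁ (h₂.shift n)

theorem free_iff_forall_detPath_eq_nil :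
    (∀ a : G.TM, a ≠ 0 → ∀ n : ℤ, G.tshift n a = a → n = 0) ↔
      ∀ v es, G.DetPath v es v → es = [] := by
  constructor
  · intro hfree v es h
    have hfix : G.tshift es.length (G.tgen v 0) = G.tgen v 0 := by
      rw [tshift_tgen]
      exact ((AddCon.eq G.tcon).2 (h.tstep 0).tcon).symm
    exact List.length_eq_zero_iff.1 (by exact_mod_cast hfree _ (tgen_ne_zero v 0) _ hfix)
  · intro hnil a ha n h
    by_contra hn
    obtain ⟨v, es, hes, hdp⟩ := exists_closed_detPath_of_tshift_eq ha hn h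
    exact hes (hnil v es hdp)

end Free

end RFGraph

/-- The graph `E` satisfies Condition (L) (every cycle has an exit) if and only if
`ℤ` acts freely on the nonzero elements of the talented monoid `M_E^{gr}`. -/
theorem conditionL_iff_free {V Ed : Type} [DecidableEq V] (G : RFGraph V Ed) :
    (∀ p : List Ed, G.IsCycle p → G.HasExit p) ↔
      ∀ a : G.TM, a ≠ 0 → ∀ n : ℤ, G.tshift n a = a → n = 0 := by
  rw [RFGraph.free_iff_forall_detPath_eq_nil, RFGraph.forall_detPath_eq_nil_iff]
  refine forall_congr' fun p => ?_
  rw [not_and]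
  exact imp_congr_right fun hp => RFGraph.hasExit_iff_not_noExit hp
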